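/- arXiv:1508.02160 — 2 statements merged into one kernel-verified Lean document; each statement's English description precedes it below -/
import Mathlib

section
/- Let Y and Z be independent real random variables and g: R → R Lipschitz with constant L, with g(Y+Z) square integrable. Then Var(g(Y+Z) - E[g(Y+Z)|Y]) ≤ 2 L² Var(Z). -/
/-!
`E[W | Y]` is the best `σ(Y)`-measurable `L²` approximation of `W = g(Y + Z)`. Comparing it with
the competitor `g(Y + E Z)`, which differs from `W` by at most `L |Z - E Z|`, gives
`Var(W - E[W | Y]) ≤ E[(W - E[W | Y])²] ≤ L² Var Z`.
-/

open MeasureTheory ProbabilityTheory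

lemma lipschitzWith_toNNReal_of_abs_sub_le {f : ℝ → ℝ} {L : ℝ}
    (hf : ∀ x y, |f x - f y| ≤ L * |x - y|) : LipschitzWith L.toNNReal f :=
  LipschitzWith.of_dist_le_mul fun x y =>
    (hf x y).trans (mul_le_mul_of_nonneg_right (Real.le_coe_toNNReal L) (abs_nonneg _))

section CondExp

variable {Ω : Type*} {m m₀ : MeasurableSpace Ω} {μ : Measure Ω} [IsFiniteMeasure μ]
  {X h : Ω → ℝ}

lemma integral_sq_sub_condExp_le (hm : m ≤ m₀) (hX : MemLp X 2 μ) :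
    ∫ ω, (X ω - μ[X | m] ω) ^ 2 ∂μ ≤ ∫ ω, X ω ^ 2 ∂μ :=
  calc ∫ ω, (X ω - μ[X | m] ω) ^ 2 ∂μ
      = ∫ ω, Var[X; μ | m] ω ∂μ := (integral_condExp hm).symm
    _ ≤ ∫ ω, μ[X ^ 2 | m] ω ∂μ :=
      integral_mono_ae integrable_condVar integrable_condExp (condVar_ae_le_condExp_sq hm hX)
    _ = ∫ ω, X ω ^ 2 ∂μ := integral_condExp hm

lemma integral_sq_sub_condExp_le_of_stronglyMeasurable (hm : m ≤ m₀) (hX : MemLp X 2 μ)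
    (hh : StronglyMeasurable[m] h) (hXh : MemLp (X - h) 2 μ) :
    ∫ ω, (X ω - μ[X | m] ω) ^ 2 ∂μ ≤ ∫ ω, (X ω - h ω) ^ 2 ∂μ := by
  have hh_int : Integrable h μ := by
    simpa using (hX.sub hXh).integrable one_le_two
  -- `h` is fixed by `μ[· | m]`, so `X` and `X - h` have the same residual.
  have hres : (fun ω => (X ω - μ[X | m] ω) ^ 2)
      =ᵐ[μ] fun ω => ((X - h) ω - μ[X - h | m] ω) ^ 2 := by
    filter_upwards [condExp_sub (hX.integrable one_le_two) hh_int m] with ω hω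
    rw [hω, Pi.sub_apply, condExp_of_stronglyMeasurable hm hh hh_int, Pi.sub_apply]
    ring
  rw [integral_congr_ae hres]
  exact integral_sq_sub_condExp_le hm hXh

end CondExp

theorem variance_residual_le_lipschitz_general
    {Ω : Type*} [MeasurableSpace Ω] (μ : Measure Ω) [IsProbabilityMeasure μ]
    (Y Z : Ω → ℝ) (hY : Measurable Y) (hZ2 : MemLp Z 2 μ)
    (g : ℝ → ℝ) (L : ℝ) (hg : ∀ x y : ℝ, |g x - g y| ≤ L * |x - y|)
    (hW : MemLp (fun ω => g (Y ω + Z ω)) 2 μ) :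
    variance ((fun ω => g (Y ω + Z ω))
        - μ[(fun ω => g (Y ω + Z ω)) | MeasurableSpace.comap Y inferInstance]) μ
      ≤ 2 * L^2 * variance Z μ := by
  have hm := hY.comap_le
  set m := MeasurableSpace.comap Y inferInstance
  set W : Ω → ℝ := fun ω => g (Y ω + Z ω)
  set c : ℝ := μ[Z]
  set h : Ω → ℝ := fun ω => g (Y ω + c)
  have hh : StronglyMeasurable[m] h :=
    ((lipschitzWith_toNNReal_of_abs_sub_le hg).continuous.measurable.comp
      ((measurable_add_const c).comp (comap_measurable Y))).stronglyMeasurable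
  have hZc : MemLp (fun ω => Z ω - c) 2 μ := hZ2.sub (memLp_const c)
  have hWh_le : ∀ ω, |W ω - h ω| ≤ L * |Z ω - c| := fun ω => by
    simpa using hg (Y ω + Z ω) (Y ω + c)
  have hWh : MemLp (W - h) 2 μ :=
    (hZc.const_mul L).of_le (hW.1.sub (hh.mono hm).aestronglyMeasurable)
      (ae_of_all _ fun ω => (hWh_le ω).trans (by
        rw [Real.norm_eq_abs, abs_mul]
        exact mul_le_mul_of_nonneg_right (le_abs_self L) (abs_nonneg _)))
  calc variance (W - μ[W | m]) μ
      ≤ ∫ ω, (W ω - μ[W | m] ω) ^ 2 ∂μ :=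
        variance_le_expectation_sq
          (hW.1.sub (stronglyMeasurable_condExp.mono hm).aestronglyMeasurable)
    _ ≤ ∫ ω, (W ω - h ω) ^ 2 ∂μ :=
        integral_sq_sub_condExp_le_of_stronglyMeasurable hm hW hh hWh
    _ ≤ ∫ ω, L ^ 2 * (Z ω - c) ^ 2 ∂μ :=
        integral_mono hWh.integrable_sq (hZc.integrable_sq.const_mul _) fun ω => by
          simpa [mul_pow] using pow_le_pow_left₀ (abs_nonneg _) (hWh_le ω) 2
    _ = L ^ 2 * variance Z μ := by
        rw [integral_const_mul, variance_eq_integral hZ2.1.aemeasurable]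
    _ ≤ 2 * L ^ 2 * variance Z μ := by nlinarith [variance_nonneg Z μ, sq_nonneg L]

/-- If `Y, Z` are independent, `g` is `L`-Lipschitz and `g(Y+Z)` is square integrable,
then `Var(g(Y+Z) - E[g(Y+Z)|Y]) ≤ 2 L² Var(Z)`. -/
theorem variance_residual_le_lipschitz
    {Ω : Type*} [MeasurableSpace Ω] (μ : Measure Ω) [IsProbabilityMeasure μ]
    (Y Z : Ω → ℝ) (hY : Measurable Y) (hZ : Measurable Z)
    (hindep : IndepFun Y Z μ) (hZ2 : MemLp Z 2 μ)
    (g : ℝ → ℝ) (L : ℝ) (hg : ∀ x y : ℝ, |g x - g y| ≤ L * |x - y|)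
    (hW : MemLp (fun ω => g (Y ω + Z ω)) 2 μ) :
    variance ((fun ω => g (Y ω + Z ω))
        - μ[(fun ω => g (Y ω + Z ω)) | MeasurableSpace.comap Y inferInstance]) μ
      ≤ 2 * L^2 * variance Z μ :=
  variance_residual_le_lipschitz_general μ Y Z hY hZ2 g L hg hW
end

section
/- Let Y, Z be independent real random variables, g: R → R Lipschitz with constant L, and f(U X) = g(Y + Z) square-integrable. Then Var(g(Y+Z)) - Var(E[g(Y+Z)|Y]) ≤ 2 L² Var(Z). -/
/-!
By the law of total variance, `Var W - Var E[W | Y] = E[Var(W | Y)] = E[(W - E[W | Y])²]`, and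
`E[W | Y]` minimises the mean square distance from `W = g(Y + Z)` among `σ(Y)`-measurable square
integrable functions. Comparing with the `σ(Y)`-measurable function `g(Y + E Z)`, whose distance
from `W` is pointwise at most `L |Z - E Z|`, bounds the difference by `L² Var Z`.
-/

open MeasureTheory ProbabilityTheory

namespace ProbabilityTheory

variable {Ω : Type*} {m m₀ : MeasurableSpace Ω} {μ : Measure[m₀] Ω} {X c : Ω → ℝ}

lemma condVar_sub_of_stronglyMeasurable (hm : m ≤ m₀) [SigmaFinite (μ.trim hm)]
    (hX : Integrable X μ) (hc : StronglyMeasurable[m] c) (hc_int : Integrable c μ) :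
    Var[X - c; μ | m] =ᵐ[μ] Var[X; μ | m] := by
  refine condExp_congr_ae ?_
  filter_upwards [condExp_sub hX hc_int m] with ω hω
  simp [hω, condExp_of_stronglyMeasurable hm hc hc_int]

lemma integral_condVar_le_integral_sq_sub (hm : m ≤ m₀) [IsFiniteMeasure μ] (hX : MemLp X 2 μ)
    (hc : StronglyMeasurable[m] c) (hc2 : MemLp c 2 μ) :
    μ[Var[X; μ | m]] ≤ ∫ ω, (X ω - c ω) ^ 2 ∂μ :=
  calc μ[Var[X; μ | m]] = ∫ ω, Var[X - c; μ | m] ω ∂μ :=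
        integral_congr_ae
          (condVar_sub_of_stronglyMeasurable hm (hX.integrable one_le_two) hc
            (hc2.integrable one_le_two)).symm
    _ ≤ ∫ ω, μ[(X - c) ^ 2 | m] ω ∂μ :=
        integral_mono_ae integrable_condVar integrable_condExp
          (condVar_ae_le_condExp_sq hm (hX.sub hc2))
    _ = ∫ ω, (X ω - c ω) ^ 2 ∂μ := integral_condExp hm

end ProbabilityTheory

section Lipschitz

variable {g : ℝ → ℝ} {L : ℝ}

lemma continuous_of_abs_sub_le_mul (hg : ∀ x y, |g x - g y| ≤ L * |x - y|) : Continuous g :=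
  (LipschitzWith.of_dist_le' fun x y => by simpa only [Real.dist_eq] using hg x y).continuous

lemma abs_comp_add_sub_comp_add_le (hg : ∀ x y, |g x - g y| ≤ L * |x - y|) (y z a : ℝ) :
    |g (y + z) - g (y + a)| ≤ L * |z - a| := by
  simpa only [add_sub_add_left_eq_sub] using hg (y + z) (y + a)

variable {Ω : Type*} [MeasurableSpace Ω] {μ : Measure Ω} {Y Z : Ω → ℝ}

lemma integral_sq_comp_add_sub_comp_add_le [IsFiniteMeasure μ]
    (hg : ∀ x y, |g x - g y| ≤ L * |x - y|) (hZ : MemLp Z 2 μ) (a : ℝ) :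
    ∫ ω, (g (Y ω + Z ω) - g (Y ω + a)) ^ 2 ∂μ
      ≤ L ^ 2 * ∫ ω, (Z ω - a) ^ 2 ∂μ := by
  rw [← integral_const_mul]
  refine integral_mono_of_nonneg (ae_of_all _ fun ω => sq_nonneg _)
    ((hZ.sub (memLp_const a)).integrable_sq.const_mul _) (ae_of_all _ fun ω => ?_)
  calc (g (Y ω + Z ω) - g (Y ω + a)) ^ 2
      = |g (Y ω + Z ω) - g (Y ω + a)| ^ 2 := (sq_abs _).symm
    _ ≤ (L * |Z ω - a|) ^ 2 :=
        pow_le_pow_left₀ (abs_nonneg _) (abs_comp_add_sub_comp_add_le hg _ _ _) 2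
    _ = L ^ 2 * (Z ω - a) ^ 2 := by rw [mul_pow, sq_abs]

lemma memLp_comp_add_sub_comp_add [IsFiniteMeasure μ] (hg : ∀ x y, |g x - g y| ≤ L * |x - y|)
    (hY : AEMeasurable Y μ) (hZ : MemLp Z 2 μ) (a : ℝ) :
    MemLp (fun ω => g (Y ω + Z ω) - g (Y ω + a)) 2 μ := by
  have hg_meas := (continuous_of_abs_sub_le_mul hg).measurable
  refine (hZ.sub (memLp_const a)).of_le_mul (c := L) ?_ <| ae_of_all _ fun ω => ?_
  · exact ((hg_meas.comp_aemeasurable (hY.add hZ.aemeasurable)).sub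
      (hg_meas.comp_aemeasurable (hY.add_const a))).aestronglyMeasurable
  · simpa only [Real.norm_eq_abs, Pi.sub_apply] using
      abs_comp_add_sub_comp_add_le hg (Y ω) (Z ω) a

end Lipschitz

theorem variance_minus_condexp_variance_le_general
    {Ω : Type*} [MeasurableSpace Ω] (μ : Measure Ω) [IsProbabilityMeasure μ]
    (Y Z : Ω → ℝ) (hY : Measurable Y)
    (hZ2 : MemLp Z 2 μ)
    (g : ℝ → ℝ) (L : ℝ) (hg : ∀ x y : ℝ, |g x - g y| ≤ L * |x - y|)
    (hW : MemLp (fun ω => g (Y ω + Z ω)) 2 μ) :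
    variance (fun ω => g (Y ω + Z ω)) μ
        - variance (μ[(fun ω => g (Y ω + Z ω)) | MeasurableSpace.comap Y inferInstance]) μ
      ≤ 2 * L^2 * variance Z μ := by
  set W : Ω → ℝ := fun ω => g (Y ω + Z ω)
  have hm := hY.comap_le
  set c : Ω → ℝ := fun ω => g (Y ω + μ[Z])
  have hc : StronglyMeasurable[MeasurableSpace.comap Y inferInstance] c :=
    ((continuous_of_abs_sub_le_mul hg).measurable.comp
      ((comap_measurable Y).add_const _)).stronglyMeasurable
  have hc2 : MemLp c 2 μ := by
    convert hW.sub (memLp_comp_add_sub_comp_add hg hY.aemeasurable hZ2 μ[Z]) using 1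
    ext ω
    simp only [W, c, Pi.sub_apply, sub_sub_cancel]
  calc _ = μ[Var[W; μ | MeasurableSpace.comap Y inferInstance]] := by
        linarith [integral_condVar_add_variance_condExp hm hW]
    _ ≤ ∫ ω, (W ω - c ω) ^ 2 ∂μ := integral_condVar_le_integral_sq_sub hm hW hc hc2
    _ ≤ L ^ 2 * Var[Z; μ] := by
        rw [variance_eq_integral hZ2.aemeasurable]
        exact integral_sq_comp_add_sub_comp_add_le hg hZ2 _
    _ ≤ 2 * L ^ 2 * Var[Z; μ] := by
        linarith [mul_nonneg (sq_nonneg L) (variance_nonneg Z μ)]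

/-- If `Y, Z` are independent, `g` is `L`-Lipschitz and `g(Y+Z)` is square integrable,
then `Var(g(Y+Z)) - Var(E[g(Y+Z)|Y]) ≤ 2 L² Var(Z)`. -/
theorem variance_minus_condexp_variance_le
    {Ω : Type*} [MeasurableSpace Ω] (μ : Measure Ω) [IsProbabilityMeasure μ]
    (Y Z : Ω → ℝ) (hY : Measurable Y) (hZ : Measurable Z)
    (hindep : IndepFun Y Z μ) (hZ2 : MemLp Z 2 μ)
    (g : ℝ → ℝ) (L : ℝ) (hg : ∀ x y : ℝ, |g x - g y| ≤ L * |x - y|)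
    (hW : MemLp (fun ω => g (Y ω + Z ω)) 2 μ) :
    variance (fun ω => g (Y ω + Z ω)) μ
        - variance (μ[(fun ω => g (Y ω + Z ω)) | MeasurableSpace.comap Y inferInstance]) μ
      ≤ 2 * L^2 * variance Z μ :=
  variance_minus_condexp_variance_le_general μ Y Z hY hZ2 g L hg hW
end
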